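/- Let $A_0, X \in \mathbb{R}^{m_1 \times m_2}$ with $A_0 \ne X$, let $\rho < 1$, and let $\lambda$ satisfy $\rho/\sqrt{\mathrm{rank}(A_0)} \ge \lambda \ge 3 \|X - A_0\|_\infty / \|X - A_0\|_2$. Let $\hat A$ minimize $A \mapsto \|A - X\|_2 + \lambda \|A\|_1$. Then $\|\hat A - X\|_2 \ge \frac{3 - \sqrt{1+\rho^2}}{3 + \sqrt{1+\rho^2}} \|A_0 - X\|_2$. -/

import Mathlib

open Matrix

noncomputable def frobNorm {m n : ℕ} (A : Matrix (Fin m) (Fin n) ℝ) : ℝ :=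
  Real.sqrt (∑ i, ∑ j, (A i j) ^ 2)

/-- Nuclear norm: sum of singular values, i.e. square roots of eigenvalues of `Aᴴ * A`. -/
noncomputable def nuclearNorm {m n : ℕ} (A : Matrix (Fin m) (Fin n) ℝ) : ℝ :=
  ∑ i, Real.sqrt ((Matrix.isHermitian_conjTranspose_mul_self A).eigenvalues i)

/-- Operator (spectral) norm: supremum of `‖A v‖` over Euclidean unit vectors `v`. -/
noncomputable def opNorm {m n : ℕ} (M : Matrix (Fin m) (Fin n) ℝ) : ℝ :=
  sSup {c | ∃ v : Fin n → ℝ, ∑ i, (v i) ^ 2 = 1 ∧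
    c = Real.sqrt (∑ i, (M.mulVec v i) ^ 2)}

def IsOrthProj {k : ℕ} (P : Matrix (Fin k) (Fin k) ℝ) : Prop :=
  P.IsSymm ∧ P * P = P

/-- `P` is the orthogonal projector onto the orthogonal complement of the column space of `A`
(the span of the left singular vectors of `A` for nonzero singular values is the column space,
and similarly the row space, i.e. column space of `Aᵀ`, for right singular vectors). -/
def IsProjPerpCol {m n : ℕ} (A : Matrix (Fin m) (Fin n) ℝ)
    (P : Matrix (Fin m) (Fin m) ℝ) : Prop :=
  IsOrthProj P ∧ P * A = 0 ∧ P.rank = m - A.rank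

/-- `P` is the orthogonal projector onto the column space of `A`. -/
def IsProjCol {m n : ℕ} (A : Matrix (Fin m) (Fin n) ℝ)
    (P : Matrix (Fin m) (Fin m) ℝ) : Prop :=
  IsOrthProj P ∧ P * A = A ∧ P.rank = A.rank

/-!
Write `d = ‖A0 - X‖₂` and `e = ‖Â - X‖₂` and split
`d² = ⟨A0 - X, Â - X⟩ + ⟨X - A0, Â - A0⟩`. The first term is at most `d e`. By trace duality
the second is at most `‖X - A0‖∞ ‖Â - A0‖₁ ≤ (λ d / 3) √(rank (Â - A0)) (e + d)`, and
`λ² rank (Â - A0) ≤ λ² rank Â + λ² rank A0 ≤ 1 + ρ²`, because a minimiser satisfies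
`λ² rank Â ≤ 1`. Rearranging `d² ≤ d e + √(1 + ρ²) d (e + d) / 3` gives the claim.
-/

open Finset

section

variable {m n : ℕ}

def frobVec : Matrix (Fin m) (Fin n) ℝ →ₗ[ℝ] EuclideanSpace ℝ (Fin m × Fin n) where
  toFun A := WithLp.toLp 2 (Function.uncurry A)
  map_add' _ _ := rfl
  map_smul' _ _ := rfl

@[simp]
lemma frobVec_apply (A : Matrix (Fin m) (Fin n) ℝ) (p : Fin m × Fin n) :
    frobVec A p = A p.1 p.2 :=
  rfl

lemma frobNorm_eq_norm_frobVec (A : Matrix (Fin m) (Fin n) ℝ) : frobNorm A = ‖frobVec A‖ := by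
  simp [frobNorm, EuclideanSpace.norm_eq, Fintype.sum_prod_type]

lemma trace_transpose_mul_eq_inner (A B : Matrix (Fin m) (Fin n) ℝ) :
    (Aᵀ * B).trace = inner ℝ (frobVec A) (frobVec B) := by
  simp only [Matrix.trace, Matrix.diag_apply, Matrix.mul_apply, Matrix.transpose_apply,
    PiLp.inner_apply, frobVec_apply, RCLike.inner_apply, Real.ringHom_apply, mul_comm,
    Fintype.sum_prod_type]
  exact Finset.sum_comm

lemma frobNorm_nonneg (A : Matrix (Fin m) (Fin n) ℝ) : 0 ≤ frobNorm A := Real.sqrt_nonneg _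

lemma frobNorm_sq (A : Matrix (Fin m) (Fin n) ℝ) : frobNorm A ^ 2 = (Aᵀ * A).trace := by
  rw [frobNorm_eq_norm_frobVec, trace_transpose_mul_eq_inner, real_inner_self_eq_norm_sq]

lemma trace_transpose_mul_le (A B : Matrix (Fin m) (Fin n) ℝ) :
    (Aᵀ * B).trace ≤ frobNorm A * frobNorm B := by
  simpa only [trace_transpose_mul_eq_inner, frobNorm_eq_norm_frobVec] using real_inner_le_norm _ _

lemma frobNorm_sub_le (A B : Matrix (Fin m) (Fin n) ℝ) :
    frobNorm (A - B) ≤ frobNorm A + frobNorm B := by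
  simpa only [frobNorm_eq_norm_frobVec, map_sub] using norm_sub_le _ _

lemma frobNorm_sub_comm (A B : Matrix (Fin m) (Fin n) ℝ) :
    frobNorm (A - B) = frobNorm (B - A) := by
  simpa only [frobNorm_eq_norm_frobVec, map_sub] using norm_sub_rev _ _

lemma frobNorm_pos {A : Matrix (Fin m) (Fin n) ℝ} (hA : A ≠ 0) : 0 < frobNorm A := by
  rw [frobNorm_eq_norm_frobVec, norm_pos_iff]
  intro h
  exact hA (funext fun i => funext fun j => congrFun (congrArg WithLp.ofLp h) (i, j))

lemma trace_mul_diagonal_mul_transpose {V : Matrix (Fin n) (Fin n) ℝ} (hV : Vᵀ * V = 1)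
    (f : Fin n → ℝ) : (V * Matrix.diagonal f * Vᵀ).trace = ∑ i, f i := by
  rw [Matrix.trace_mul_comm, ← Matrix.mul_assoc, hV, Matrix.one_mul, Matrix.trace_diagonal]

lemma sum_sq_apply_eq_transpose_mul_self_apply (A : Matrix (Fin m) (Fin n) ℝ) (j : Fin n) :
    ∑ i, A i j ^ 2 = (Aᵀ * A) j j := by
  simp [Matrix.mul_apply, sq]

lemma nuclearNorm_eq_of_transpose_mul_self_eq {N : Matrix (Fin m) (Fin n) ℝ}
    {V : Matrix (Fin n) (Fin n) ℝ} (hV : Vᵀ * V = 1) {g : Fin n → ℝ}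
    (h : Nᵀ * N = V * Matrix.diagonal g * Vᵀ) : nuclearNorm N = ∑ i, √(g i) := by
  have hN := Matrix.isHermitian_conjTranspose_mul_self N
  have hroots : univ.val.map hN.eigenvalues = univ.val.map g := by
    have hchar : (Nᴴ * N).charpoly = (Matrix.diagonal g).charpoly := by
      rw [Matrix.conjTranspose_eq_transpose_of_trivial, h, Matrix.charpoly_mul_comm,
        ← Matrix.mul_assoc, hV, Matrix.one_mul]
    have := hN.roots_charpoly_eq_eigenvalues
    rw [hchar, Matrix.charpoly_diagonal, Polynomial.roots_prod _ _
      (by simp [Finset.prod_ne_zero_iff, Polynomial.X_sub_C_ne_zero])] at this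
    simpa using this.symm
  have := congrArg (fun s => (s.map Real.sqrt).sum) hroots
  simp only [Multiset.map_map, Function.comp_def] at this
  exact this

lemma frobNorm_sq_eq_of_transpose_mul_self_eq {N : Matrix (Fin m) (Fin n) ℝ}
    {V : Matrix (Fin n) (Fin n) ℝ} (hV : Vᵀ * V = 1) {g : Fin n → ℝ}
    (h : Nᵀ * N = V * Matrix.diagonal g * Vᵀ) : frobNorm N ^ 2 = ∑ i, g i := by
  rw [frobNorm_sq, h, trace_mul_diagonal_mul_transpose hV]

section SingularValues

variable (N : Matrix (Fin m) (Fin n) ℝ)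

noncomputable def rightSingularVectors : Matrix (Fin n) (Fin n) ℝ :=
  (Matrix.isHermitian_conjTranspose_mul_self N).eigenvectorUnitary

noncomputable def singularValues (i : Fin n) : ℝ :=
  √((Matrix.isHermitian_conjTranspose_mul_self N).eigenvalues i)

local notation "U" => rightSingularVectors N
local notation "σ" => singularValues N

lemma transpose_mul_rightSingularVectors : Uᵀ * U = 1 :=
  Matrix.mem_unitaryGroup_iff'.mp (Matrix.isHermitian_conjTranspose_mul_self N).eigenvectorUnitary.2

lemma rightSingularVectors_mul_transpose : U * Uᵀ = 1 :=
  Matrix.mem_unitaryGroup_iff.mp (Matrix.isHermitian_conjTranspose_mul_self N).eigenvectorUnitary.2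

lemma singularValues_nonneg (i : Fin n) : 0 ≤ σ i := Real.sqrt_nonneg _

lemma nuclearNorm_eq_sum_singularValues : nuclearNorm N = ∑ i, σ i := rfl

lemma transpose_mul_self_eq_singularValues :
    Nᵀ * N = U * Matrix.diagonal (fun i => σ i ^ 2) * Uᵀ := by
  have hN := Matrix.isHermitian_conjTranspose_mul_self N
  have hsq : (fun i => σ i ^ 2) = hN.eigenvalues := funext fun i =>
    Real.sq_sqrt ((Matrix.posSemidef_conjTranspose_mul_self N).eigenvalues_nonneg i)
  rw [hsq]
  exact hN.spectral_theorem

lemma frobNorm_sq_eq_sum_singularValues_sq : frobNorm N ^ 2 = ∑ i, σ i ^ 2 :=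
  frobNorm_sq_eq_of_transpose_mul_self_eq (transpose_mul_rightSingularVectors N)
    (transpose_mul_self_eq_singularValues N)

lemma rank_eq_card_singularValues_ne_zero : N.rank = #{i | σ i ≠ 0} := by
  have hN := Matrix.isHermitian_conjTranspose_mul_self N
  rw [← Matrix.rank_conjTranspose_mul_self, hN.rank_eq_card_non_zero_eigs, Fintype.card_subtype]
  congr! 2 with i
  exact (Real.sqrt_ne_zero ((Matrix.posSemidef_conjTranspose_mul_self N).eigenvalues_nonneg i)).symm

lemma transpose_mul_self_mul_rightSingularVectors :
    (N * U)ᵀ * (N * U) = Matrix.diagonal (fun i => σ i ^ 2) := by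
  rw [Matrix.transpose_mul, Matrix.mul_assoc, ← Matrix.mul_assoc Nᵀ,
    transpose_mul_self_eq_singularValues]
  simp only [← Matrix.mul_assoc, transpose_mul_rightSingularVectors, Matrix.one_mul]
  rw [Matrix.mul_assoc, transpose_mul_rightSingularVectors, Matrix.mul_one]

noncomputable def scaleSingularValues (k : Fin n → ℝ) : Matrix (Fin m) (Fin n) ℝ :=
  N * U * Matrix.diagonal k * Uᵀ

lemma transpose_mul_self_scaleSingularValues (k : Fin n → ℝ) :
    (scaleSingularValues N k)ᵀ * scaleSingularValues N k =
      U * Matrix.diagonal (fun i => (k i * σ i) ^ 2) * Uᵀ := by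
  have hdiag : Matrix.diagonal k * Matrix.diagonal (fun i => σ i ^ 2) * Matrix.diagonal k =
      Matrix.diagonal (fun i => (k i * σ i) ^ 2) := by
    simp only [Matrix.diagonal_mul_diagonal]
    congr 1
    funext i
    ring
  rw [← hdiag, ← transpose_mul_self_mul_rightSingularVectors]
  simp only [scaleSingularValues, Matrix.transpose_mul, Matrix.transpose_transpose,
    Matrix.diagonal_transpose, Matrix.mul_assoc]

lemma nuclearNorm_scaleSingularValues (k : Fin n → ℝ) :
    nuclearNorm (scaleSingularValues N k) = ∑ i, |k i * σ i| := by
  simp only [nuclearNorm_eq_of_transpose_mul_self_eq (transpose_mul_rightSingularVectors N)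
    (transpose_mul_self_scaleSingularValues N k), Real.sqrt_sq_eq_abs]

lemma frobNorm_sq_scaleSingularValues (k : Fin n → ℝ) :
    frobNorm (scaleSingularValues N k) ^ 2 = ∑ i, (k i * σ i) ^ 2 :=
  frobNorm_sq_eq_of_transpose_mul_self_eq (transpose_mul_rightSingularVectors N)
    (transpose_mul_self_scaleSingularValues N k)

lemma scaleSingularValues_one : scaleSingularValues N 1 = N := by
  simp [scaleSingularValues, Matrix.mul_assoc, rightSingularVectors_mul_transpose]

lemma sub_scaleSingularValues (k : Fin n → ℝ) :
    N - scaleSingularValues N k = scaleSingularValues N (1 - k) := by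
  nth_rw 1 [← scaleSingularValues_one N]
  simp only [scaleSingularValues, ← Matrix.sub_mul, ← Matrix.mul_sub, Matrix.diagonal_sub]
  rfl

end SingularValues

lemma sqrt_sum_mulVec_sq_le_opNorm (M : Matrix (Fin m) (Fin n) ℝ) {v : Fin n → ℝ}
    (hv : ∑ j, v j ^ 2 = 1) : √(∑ i, (M *ᵥ v) i ^ 2) ≤ opNorm M := by
  refine le_csSup ⟨frobNorm M, ?_⟩ ⟨v, hv, rfl⟩
  rintro c ⟨w, hw, rfl⟩
  refine Real.sqrt_le_sqrt (Finset.sum_le_sum fun i _ => ?_)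
  calc (M *ᵥ w) i ^ 2 = (∑ j, M i j * w j) ^ 2 := rfl
    _ ≤ (∑ j, M i j ^ 2) * ∑ j, w j ^ 2 := Finset.sum_mul_sq_le_sq_mul_sq _ _ _
    _ = ∑ j, M i j ^ 2 := by rw [hw, mul_one]

lemma opNorm_nonneg (M : Matrix (Fin m) (Fin n) ℝ) : 0 ≤ opNorm M :=
  Real.sSup_nonneg fun _ ⟨_, _, hc⟩ => hc ▸ Real.sqrt_nonneg _

lemma opNorm_pos {M : Matrix (Fin m) (Fin n) ℝ} (hM : M ≠ 0) : 0 < opNorm M := by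
  obtain ⟨i, j, hij⟩ : ∃ i j, M i j ≠ 0 := by
    by_contra! h
    exact hM (Matrix.ext h)
  have hunit : ∑ k, (Pi.single j 1 : Fin n → ℝ) k ^ 2 = 1 := by simp [Pi.single_apply]
  refine lt_of_lt_of_le ?_ (sqrt_sum_mulVec_sq_le_opNorm M hunit)
  rw [Real.sqrt_pos, Matrix.mulVec_single_one]
  exact lt_of_lt_of_le (pow_pos (abs_pos.mpr hij) 2 |>.trans_eq (sq_abs _))
    (Finset.single_le_sum (f := fun k => M k j ^ 2) (fun _ _ => sq_nonneg _) (mem_univ i))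

lemma trace_transpose_mul_le_opNorm_mul_nuclearNorm (M N : Matrix (Fin m) (Fin n) ℝ) :
    (Mᵀ * N).trace ≤ opNorm M * nuclearNorm N := by
  set V := rightSingularVectors N
  have hrotate : (Mᵀ * N).trace = ∑ j, ∑ i, (M * V) i j * (N * V) i j := by
    have : (Mᵀ * N).trace = ((M * V)ᵀ * (N * V)).trace := by
      rw [Matrix.transpose_mul, Matrix.mul_assoc, Matrix.trace_mul_comm Vᵀ, Matrix.mul_assoc,
        Matrix.mul_assoc, rightSingularVectors_mul_transpose, Matrix.mul_one]
    rw [this]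
    rfl
  rw [hrotate, nuclearNorm_eq_sum_singularValues, Finset.mul_sum]
  refine Finset.sum_le_sum fun j _ => ?_
  have hcol : ∑ k, V k j ^ 2 = 1 := by
    rw [sum_sq_apply_eq_transpose_mul_self_apply, transpose_mul_rightSingularVectors,
      Matrix.one_apply_eq]
  have hσ : √(∑ i, (N * V) i j ^ 2) = singularValues N j := by
    rw [sum_sq_apply_eq_transpose_mul_self_apply, transpose_mul_self_mul_rightSingularVectors,
      Matrix.diagonal_apply_eq, Real.sqrt_sq (singularValues_nonneg N j)]
  calc ∑ i, (M * V) i j * (N * V) i j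
      ≤ √(∑ i, (M * V) i j ^ 2) * √(∑ i, (N * V) i j ^ 2) :=
        Real.sum_mul_le_sqrt_mul_sqrt _ _ _
    _ ≤ opNorm M * singularValues N j := by
      rw [hσ]
      exact mul_le_mul_of_nonneg_right (sqrt_sum_mulVec_sq_le_opNorm M hcol)
        (singularValues_nonneg N j)

lemma nuclearNorm_le_sqrt_rank_mul_frobNorm (N : Matrix (Fin m) (Fin n) ℝ) :
    nuclearNorm N ≤ √N.rank * frobNorm N := by
  set σ := singularValues N
  have hsupp : nuclearNorm N = ∑ i ∈ {i | σ i ≠ 0}, σ i := by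
    rw [nuclearNorm_eq_sum_singularValues, Finset.sum_filter_ne_zero]
  have hsq : nuclearNorm N ^ 2 ≤ N.rank * frobNorm N ^ 2 := by
    rw [hsupp, rank_eq_card_singularValues_ne_zero, frobNorm_sq_eq_sum_singularValues_sq]
    refine sq_sum_le_card_mul_sum_sq.trans ?_
    exact mul_le_mul_of_nonneg_left (Finset.sum_le_univ_sum_of_nonneg fun i => sq_nonneg (σ i))
      (Nat.cast_nonneg _)
  rw [← Real.sqrt_sq (frobNorm_nonneg N), ← Real.sqrt_mul (Nat.cast_nonneg _)]
  exact Real.le_sqrt_of_sq_le hsq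

lemma rank_sub_le (A B : Matrix (Fin m) (Fin n) ℝ) : (A - B).rank ≤ A.rank + B.rank := by
  have hle : LinearMap.range (A - B).mulVecLin ≤
      LinearMap.range A.mulVecLin ⊔ LinearMap.range B.mulVecLin := by
    rintro _ ⟨v, rfl⟩
    rw [Matrix.mulVecLin_apply, Matrix.sub_mulVec]
    exact Submodule.sub_mem _ (Submodule.mem_sup_left ⟨v, rfl⟩)
      (Submodule.mem_sup_right ⟨v, rfl⟩)
  exact (Submodule.finrank_mono hle).trans (Submodule.finrank_add_le_finrank_add_finrank _ _)

/-- Shrinking every nonzero singular value of `Ahat` by the smallest one, `t`, lowers the nuclear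
norm by `t * rank Ahat` but moves `Ahat` only by `t * √(rank Ahat)` in Frobenius norm. -/
theorem sq_mul_rank_le_one_of_minimizes {lam : ℝ} (hlam : 0 < lam)
    (X Ahat : Matrix (Fin m) (Fin n) ℝ)
    (hmin : ∀ A : Matrix (Fin m) (Fin n) ℝ,
      frobNorm (Ahat - X) + lam * nuclearNorm Ahat ≤ frobNorm (A - X) + lam * nuclearNorm A) :
    lam ^ 2 * Ahat.rank ≤ 1 := by
  rw [rank_eq_card_singularValues_ne_zero]
  set σ := singularValues Ahat
  set T : Finset (Fin n) := {i | σ i ≠ 0}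
  rcases T.eq_empty_or_nonempty with hT | hT
  · simp [hT]
  set r : ℝ := (#T : ℝ)
  obtain ⟨i₀, hi₀, ht_le⟩ := T.exists_min_image σ hT
  set t := σ i₀
  have ht : 0 < t := (singularValues_nonneg _ _).lt_of_ne' (mem_filter.mp hi₀).2
  set k : Fin n → ℝ := fun i => t * (σ i)⁻¹
  have hk : ∀ i, k i * σ i = if σ i ≠ 0 then t else 0 := by
    intro i
    split_ifs with hi
    · simp [k, hi]
    · simp [k, not_not.mp hi]
  have hcount : ∀ c : ℝ, ∑ i, (if σ i ≠ 0 then c else 0) = c * r := by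
    intro c
    rw [← Finset.sum_filter, sum_const, nsmul_eq_mul, mul_comm]
  set W := scaleSingularValues Ahat k
  have hW : frobNorm W = t * √r := by
    have hsq : frobNorm W ^ 2 = t ^ 2 * r := by
      have hW_sq : frobNorm W ^ 2 = ∑ i, (k i * σ i) ^ 2 :=
        frobNorm_sq_scaleSingularValues Ahat k
      simp only [hW_sq, hk, ite_pow, zero_pow two_ne_zero, hcount]
    rw [← Real.sqrt_sq (frobNorm_nonneg W), hsq, Real.sqrt_mul (sq_nonneg t), Real.sqrt_sq ht.le]
  have hnuc : nuclearNorm (Ahat - W) = nuclearNorm Ahat - t * r := by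
    have hterm : ∀ i, |(1 - k) i * σ i| = σ i - if σ i ≠ 0 then t else 0 := by
      intro i
      rw [Pi.sub_apply, Pi.one_apply, sub_mul, one_mul, hk]
      split_ifs with hi
      · exact abs_of_nonneg (sub_nonneg.mpr (ht_le i (mem_filter.mpr ⟨mem_univ i, hi⟩)))
      · simpa using singularValues_nonneg Ahat i
    have hnuc_sum : nuclearNorm (Ahat - W) = ∑ i, |(1 - k) i * σ i| := by
      rw [sub_scaleSingularValues]
      exact nuclearNorm_scaleSingularValues Ahat (1 - k)
    rw [hnuc_sum, nuclearNorm_eq_sum_singularValues]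
    simp only [hterm, sum_sub_distrib, hcount]
    rfl
  have hdecrease : lam * (t * r) ≤ t * √r := by
    have htri : frobNorm (Ahat - W - X) ≤ frobNorm (Ahat - X) + frobNorm W := by
      rw [sub_right_comm]
      exact frobNorm_sub_le _ _
    have hopt := hmin (Ahat - W)
    rw [hnuc] at hopt
    linarith
  have hr : 0 < √r := Real.sqrt_pos.mpr (by simpa [r] using hT)
  have hr_sq : √r ^ 2 = r := Real.sq_sqrt (Nat.cast_nonneg _)
  have hbound : lam * √r ≤ 1 := by
    refine le_of_mul_le_mul_right ?_ hr
    rw [mul_assoc, ← sq, hr_sq, one_mul]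
    exact le_of_mul_le_mul_left (by linarith) ht
  calc lam ^ 2 * r = (lam * √r) ^ 2 := by rw [mul_pow, hr_sq]
    _ ≤ 1 := pow_le_one₀ (by positivity) hbound

lemma sq_mul_le_sq_of_le_div_sqrt {lam ρ r : ℝ} (hlam : 0 ≤ lam) (hr : 0 ≤ r)
    (h : lam ≤ ρ / √r) : lam ^ 2 * r ≤ ρ ^ 2 := by
  rcases hr.eq_or_lt with rfl | hr
  · simpa using sq_nonneg ρ
  have h' : lam * √r ≤ ρ := (le_div_iff₀ (Real.sqrt_pos.mpr hr)).mp h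
  calc lam ^ 2 * r = (lam * √r) ^ 2 := by rw [mul_pow, Real.sq_sqrt hr.le]
    _ ≤ ρ ^ 2 := pow_le_pow_left₀ (by positivity) h' 2


lemma mul_sqrt_rank_sub_le {lam a b : ℝ} (hlam : 0 ≤ lam) {A B : Matrix (Fin m) (Fin n) ℝ}
    (hA : lam ^ 2 * A.rank ≤ a) (hB : lam ^ 2 * B.rank ≤ b) :
    lam * √(A - B).rank ≤ √(a + b) := by
  have hsub : ((A - B).rank : ℝ) ≤ A.rank + B.rank := by exact_mod_cast rank_sub_le A B
  rw [← Real.sqrt_sq hlam, ← Real.sqrt_mul (sq_nonneg lam)]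
  exact Real.sqrt_le_sqrt (by nlinarith)

lemma frobNorm_sub_sq_le (A X Ahat : Matrix (Fin m) (Fin n) ℝ) :
    frobNorm (A - X) ^ 2 ≤ frobNorm (A - X) * frobNorm (Ahat - X) +
      opNorm (X - A) * (√(Ahat - A).rank * (frobNorm (Ahat - X) + frobNorm (A - X))) := by
  have hdist : frobNorm (Ahat - A) ≤ frobNorm (Ahat - X) + frobNorm (A - X) := by
    simpa only [sub_sub_sub_cancel_right] using frobNorm_sub_le (Ahat - X) (A - X)
  calc frobNorm (A - X) ^ 2
        = ((A - X)ᵀ * (Ahat - X)).trace + ((X - A)ᵀ * (Ahat - A)).trace := by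
        rw [frobNorm_sq, ← Matrix.trace_add]
        congr 1
        simp only [Matrix.transpose_sub, Matrix.sub_mul, Matrix.mul_sub]
        abel
    _ ≤ frobNorm (A - X) * frobNorm (Ahat - X) + opNorm (X - A) * nuclearNorm (Ahat - A) :=
        add_le_add (trace_transpose_mul_le _ _) (trace_transpose_mul_le_opNorm_mul_nuclearNorm _ _)
    _ ≤ _ := by
        gcongr
        · exact opNorm_nonneg _
        · exact (nuclearNorm_le_sqrt_rank_mul_frobNorm _).trans (by gcongr)

end

theorem stmt3_general {m1 m2 : ℕ} (A0 X : Matrix (Fin m1) (Fin m2) ℝ) (hne : A0 ≠ X)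
    (ρ lam : ℝ)
    (hlam1 : lam ≤ ρ / Real.sqrt (A0.rank))
    (hlam2 : 3 * opNorm (X - A0) / frobNorm (X - A0) ≤ lam)
    (Ahat : Matrix (Fin m1) (Fin m2) ℝ)
    (hmin : ∀ A : Matrix (Fin m1) (Fin m2) ℝ,
      frobNorm (Ahat - X) + lam * nuclearNorm Ahat ≤ frobNorm (A - X) + lam * nuclearNorm A) :
    ((3 - Real.sqrt (1 + ρ ^ 2)) / (3 + Real.sqrt (1 + ρ ^ 2))) * frobNorm (A0 - X) ≤
      frobNorm (Ahat - X) := by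
  set d := frobNorm (A0 - X)
  set e := frobNorm (Ahat - X)
  set s := √(1 + ρ ^ 2)
  set r := √(Ahat - A0).rank
  have hd : 0 < d := frobNorm_pos (sub_ne_zero.mpr hne)
  have he : 0 ≤ e := frobNorm_nonneg _
  have hop : 3 * opNorm (X - A0) ≤ lam * d := by
    rwa [frobNorm_sub_comm, div_le_iff₀ hd] at hlam2
  have hlam : 0 < lam :=
    pos_of_mul_pos_left (hop.trans_lt' (by linarith [opNorm_pos (sub_ne_zero.mpr hne.symm)])) hd.le
  have hrank : lam * r ≤ s := mul_sqrt_rank_sub_le hlam.le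
    (sq_mul_rank_le_one_of_minimizes hlam X Ahat hmin)
    (sq_mul_le_sq_of_le_div_sqrt hlam.le (Nat.cast_nonneg _) hlam1)
  have hcross : 3 * (opNorm (X - A0) * (r * (e + d))) ≤ s * (d * (e + d)) :=
    calc 3 * (opNorm (X - A0) * (r * (e + d))) = 3 * opNorm (X - A0) * (r * (e + d)) := by ring
      _ ≤ lam * d * (r * (e + d)) := by gcongr
      _ = lam * r * (d * (e + d)) := by ring
      _ ≤ s * (d * (e + d)) := by gcongr
  have hfinal : (3 - s) * d ≤ (3 + s) * e := by
    nlinarith [frobNorm_sub_sq_le A0 X Ahat]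
  rw [div_mul_eq_mul_div, div_le_iff₀ (by positivity)]
  linarith

/-- Lemma 2 of the paper. -/
theorem stmt3 {m1 m2 : ℕ} (A0 X : Matrix (Fin m1) (Fin m2) ℝ) (hne : A0 ≠ X)
    (ρ lam : ℝ) (hρ : ρ < 1)
    (hlam1 : lam ≤ ρ / Real.sqrt (A0.rank))
    (hlam2 : 3 * opNorm (X - A0) / frobNorm (X - A0) ≤ lam)
    (Ahat : Matrix (Fin m1) (Fin m2) ℝ)
    (hmin : ∀ A : Matrix (Fin m1) (Fin m2) ℝ,
      frobNorm (Ahat - X) + lam * nuclearNorm Ahat ≤ frobNorm (A - X) + lam * nuclearNorm A) :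
    ((3 - Real.sqrt (1 + ρ ^ 2)) / (3 + Real.sqrt (1 + ρ ^ 2))) * frobNorm (A0 - X) ≤
      frobNorm (Ahat - X) :=
  stmt3_general A0 X hne ρ lam hlam1 hlam2 Ahat hmin
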